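/- Let a < b be real numbers, let a = t_0 < t_1 < ⋯ < t_N = b be a partition of [a,b] with mesh size max_i (t_i − t_{i−1}) ≤ h, and let f : ℝ → ℝ be measurable, integrable on (a,b), and of finite pointwise total variation V on [a,b] (V is the supremum over all finite increasing sequences a ≤ s_0 < ⋯ < s_K ≤ b of ∑_k |f(s_{k+1}) − f(s_k)|). Let P_h f be the piecewise constant function whose value on (t_{i−1}, t_i) is the mean m_i = (t_i − t_{i−1})^{−1} ∫_{t_{i−1}}^{t_i} f. Then ∫_a^b |f(x) − (P_h f)(x)| dx ≤ h · V. -/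

import Mathlib

open MeasureTheory

/-- The piecewise constant local average of `f` on the partition
`a = t 0 < t 1 < ⋯ < t N = b`. -/
noncomputable def locAvg (t : ℕ → ℝ) (N : ℕ) (f : ℝ → ℝ) : ℝ → ℝ :=
  fun x => ∑ i ∈ Finset.Icc 1 N,
    Set.indicator (Set.Ioc (t (i - 1)) (t i))
      (fun _ => (t i - t (i - 1))⁻¹ * ∫ y in (t (i - 1))..(t i), f y) x

/-! On a cell `I` of the partition, `f x` minus the mean of `f` over `I` is the mean of
`f x - f y` over `y ∈ I`, so it is bounded by the variation of `f` on `I`; integrating over `I`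
gives `∫_I |f - P_h f| ≤ |I| · Var_I f ≤ h · Var_I f`. The variations on the cells add up to the
variation on `[a, b]`, which the hypothesis bounds by `V` because the variation may be computed
along strictly increasing sequences only. -/

open Set
open scoped Interval

theorem eVariationOn_le_ofReal_of_sum_le {α E : Type*} [LinearOrder α] [PseudoMetricSpace E]
    {f : α → E} {s : Set α} {V : ℝ}
    (hV : ∀ (K : ℕ) (u : ℕ → α), (∀ k < K, u k < u (k + 1)) →
      (∀ k ≤ K, u k ∈ s) → ∑ k ∈ Finset.range K, dist (f (u (k + 1))) (f (u k)) ≤ V) :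
    eVariationOn f s ≤ ENNReal.ofReal V := by
  rw [eVariationOn.eVariationOn_eq_strictMonoOn]
  refine iSup_le fun ⟨K, u, hu, hus⟩ => ?_
  simp only [edist_dist]
  rw [← ENNReal.ofReal_sum_of_nonneg fun _ _ => dist_nonneg]
  refine ENNReal.ofReal_le_ofReal (hV K u (fun k hk => hu ?_ ?_ (lt_add_one k)) hus)
  · simp only [mem_Iic]; omega
  · simp only [mem_Iic]; omega

theorem sum_eVariationOn_Icc_of_monotoneOn {α E : Type*} [LinearOrder α]
    [PseudoEMetricSpace E] (f : α → E) {t : ℕ → α} {N : ℕ} (ht : MonotoneOn t (Iic N)) :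
    ∑ k ∈ Finset.range N, eVariationOn f (Icc (t k) (t (k + 1)))
      = eVariationOn f (Icc (t 0) (t N)) := by
  have hmono : Monotone fun i => t (min i N) := fun i j hij =>
    ht (min_le_right i N) (min_le_right j N) (min_le_min_right N hij)
  convert eVariationOn.sum' f hmono using 2 with k hk
  · rw [min_eq_left (Finset.mem_range.1 hk).le, min_eq_left (Finset.mem_range.1 hk)]
  · simp

theorem abs_sub_interval_average_le {f : ℝ → ℝ} {c d W x : ℝ} (hcd : c < d)
    (hf : IntervalIntegrable f volume c d) (hW : ∀ y ∈ Ioc c d, |f x - f y| ≤ W) :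
    |f x - ⨍ y in c..d, f y| ≤ W := by
  have hpos : 0 < d - c := sub_pos.2 hcd
  have hmean : f x - ⨍ y in c..d, f y = (d - c)⁻¹ * ∫ y in c..d, (f x - f y) := by
    rw [interval_average_eq, smul_eq_mul,
      intervalIntegral.integral_sub intervalIntegrable_const hf, intervalIntegral.integral_const,
      smul_eq_mul]
    field_simp
  have hint : |∫ y in c..d, (f x - f y)| ≤ W * (d - c) := by
    have h := intervalIntegral.norm_integral_le_of_norm_le_const
      (f := fun y => f x - f y) (C := W) fun y hy => by rw [uIoc_of_le hcd.le] at hy; exact hW y hy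
    rwa [Real.norm_eq_abs, abs_of_pos hpos] at h
  rw [hmean, abs_mul, abs_inv, abs_of_pos hpos]
  calc (d - c)⁻¹ * |∫ y in c..d, (f x - f y)| ≤ (d - c)⁻¹ * (W * (d - c)) := by gcongr
    _ = W := by field_simp

theorem integral_abs_sub_interval_average_le {f : ℝ → ℝ} {c d W : ℝ} (hcd : c ≤ d)
    (hf : IntervalIntegrable f volume c d)
    (hW : ∀ x ∈ Ioc c d, ∀ y ∈ Ioc c d, |f x - f y| ≤ W) :
    ∫ x in c..d, |f x - ⨍ y in c..d, f y| ≤ (d - c) * W := by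
  have h := intervalIntegral.norm_integral_le_of_norm_le_const
    (f := fun x => |f x - ⨍ y in c..d, f y|) (a := c) (b := d) (C := W) fun x hx => by
      rw [uIoc_of_le hcd] at hx
      rw [Real.norm_eq_abs, abs_abs]
      exact abs_sub_interval_average_le (hx.1.trans_le hx.2) hf (hW x hx)
  rw [Real.norm_eq_abs, abs_of_nonneg (sub_nonneg.2 hcd), mul_comm] at h
  exact (le_abs_self _).trans h

theorem integral_abs_sub_interval_average_le_eVariationOn {f : ℝ → ℝ} {c d : ℝ} (hcd : c ≤ d)
    (hf : IntervalIntegrable f volume c d) (hbv : BoundedVariationOn f (Icc c d)) :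
    ∫ x in c..d, |f x - ⨍ y in c..d, f y| ≤ (d - c) * (eVariationOn f (Icc c d)).toReal :=
  integral_abs_sub_interval_average_le hcd hf fun x hx y hy => by
    simpa only [Real.dist_eq] using hbv.dist_le (Ioc_subset_Icc_self hx) (Ioc_subset_Icc_self hy)

theorem MonotoneOn.Icc_subset_Icc_of_lt {α : Type*} [Preorder α] {t : ℕ → α} {N k : ℕ}
    (ht : MonotoneOn t (Iic N)) (hk : k < N) : Icc (t k) (t (k + 1)) ⊆ Icc (t 0) (t N) :=
  Icc_subset_Icc (ht (Nat.zero_le N) hk.le (Nat.zero_le k)) (ht hk (le_refl N) hk)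

theorem locAvg_eqOn_Ioc {t : ℕ → ℝ} {N k : ℕ} (ht : MonotoneOn t (Iic N)) (hk : k < N)
    (f : ℝ → ℝ) :
    EqOn (locAvg t N f) (fun _ => ⨍ y in t k..t (k + 1), f y) (Ioc (t k) (t (k + 1))) := by
  intro x hx
  rw [locAvg, Finset.sum_eq_single_of_mem (k + 1) (Finset.mem_Icc.2 ⟨by omega, by omega⟩),
    Nat.add_sub_cancel, indicator_of_mem hx, interval_average_eq, smul_eq_mul]
  intro j hj hjk
  obtain ⟨hj1, hjN⟩ := Finset.mem_Icc.1 hj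
  refine indicator_of_notMem (fun hxj => ?_) _
  rcases lt_or_gt_of_ne hjk with hlt | hgt
  · have := ht hjN hk.le (by omega : j ≤ k)
    linarith [hxj.2, hx.1]
  · have := ht hk (by omega : j - 1 ≤ N) (by omega : k + 1 ≤ j - 1)
    linarith [hxj.1, hx.2]

theorem integral_abs_sub_locAvg_eq_sum {t : ℕ → ℝ} {N : ℕ} (ht : MonotoneOn t (Iic N))
    {f : ℝ → ℝ} (hf : ∀ k < N, IntervalIntegrable f volume (t k) (t (k + 1))) :
    ∫ x in t 0..t N, |f x - locAvg t N f x|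
      = ∑ k ∈ Finset.range N, ∫ x in t k..t (k + 1), |f x - ⨍ y in t k..t (k + 1), f y| := by
  have hcell : ∀ k < N, EqOn (fun x => |f x - locAvg t N f x|)
      (fun x => |f x - ⨍ y in t k..t (k + 1), f y|) (Ι (t k) (t (k + 1))) :=
    fun k hk x hx => by
    rw [uIoc_of_le (ht hk.le hk k.le_succ)] at hx
    simp only [locAvg_eqOn_Ioc ht hk f hx]
  rw [← intervalIntegral.sum_integral_adjacent_intervals fun k hk =>
    (((hf k hk).sub intervalIntegrable_const).abs).congr (hcell k hk).symm]
  exact Finset.sum_congr rfl fun k hk => intervalIntegral.integral_congr_ae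
    (Filter.Eventually.of_forall (hcell k (Finset.mem_range.1 hk)))

theorem sum_integral_abs_sub_interval_average_le {t : ℕ → ℝ} {N : ℕ} {h : ℝ} {f : ℝ → ℝ}
    (ht : MonotoneOn t (Iic N)) (hmesh : ∀ k < N, t (k + 1) - t k ≤ h)
    (hf : ∀ k < N, IntervalIntegrable f volume (t k) (t (k + 1)))
    (hbv : BoundedVariationOn f (Icc (t 0) (t N))) :
    ∑ k ∈ Finset.range N, ∫ x in t k..t (k + 1), |f x - ⨍ y in t k..t (k + 1), f y|
      ≤ h * (eVariationOn f (Icc (t 0) (t N))).toReal := by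
  have hbv_cell : ∀ k < N, BoundedVariationOn f (Icc (t k) (t (k + 1))) := fun k hk =>
    ne_top_of_le_ne_top hbv (eVariationOn.mono f (ht.Icc_subset_Icc_of_lt hk))
  calc ∑ k ∈ Finset.range N, ∫ x in t k..t (k + 1), |f x - ⨍ y in t k..t (k + 1), f y|
      ≤ ∑ k ∈ Finset.range N, h * (eVariationOn f (Icc (t k) (t (k + 1)))).toReal := by
        refine Finset.sum_le_sum fun k hk => ?_
        have hk := Finset.mem_range.1 hk
        exact (integral_abs_sub_interval_average_le_eVariationOn (ht hk.le hk k.le_succ)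
          (hf k hk) (hbv_cell k hk)).trans
          (mul_le_mul_of_nonneg_right (hmesh k hk) ENNReal.toReal_nonneg)
    _ = h * (eVariationOn f (Icc (t 0) (t N))).toReal := by
        rw [← Finset.mul_sum, ← ENNReal.toReal_sum fun k hk => hbv_cell k (Finset.mem_range.1 hk),
          sum_eVariationOn_Icc_of_monotoneOn f ht]

theorem L1_local_average_error_le_h_tv_general
    (a b : ℝ) (hab : a < b) (N : ℕ) (hN : 1 ≤ N)
    (t : ℕ → ℝ) (ht0 : t 0 = a) (htN : t N = b)
    (hmono : ∀ i < N, t i < t (i + 1))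
    (h : ℝ) (hmesh : ∀ i ∈ Finset.Icc 1 N, t i - t (i - 1) ≤ h)
    (f : ℝ → ℝ)
    (hfi : IntegrableOn f (Set.Ioo a b))
    (V : ℝ)
    (hV : ∀ (K : ℕ) (s : ℕ → ℝ), (∀ k < K, s k < s (k + 1)) →
      a ≤ s 0 → s K ≤ b →
      ∑ k ∈ Finset.range K, |f (s (k + 1)) - f (s k)| ≤ V) :
    (∫ x in a..b, |f x - locAvg t N f x|) ≤ h * V := by
  have ht : MonotoneOn t (Iic N) :=
    (strictMonoOn_Iic_of_lt_succ fun m hm => by simpa using hmono m hm).monotoneOn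
  have hmesh' : ∀ k < N, t (k + 1) - t k ≤ h := fun k hk => by
    simpa using hmesh (k + 1) (Finset.mem_Icc.2 ⟨by omega, by omega⟩)
  have hh : 0 ≤ h := (sub_pos.2 (hmono 0 hN)).le.trans (hmesh' 0 hN)
  have hV0 : 0 ≤ V := by simpa using hV 0 (fun _ => a) (by simp) le_rfl hab.le
  have hvar : eVariationOn f (Icc a b) ≤ ENNReal.ofReal V :=
    eVariationOn_le_ofReal_of_sum_le fun K u hu hus => by
      simpa only [Real.dist_eq] using hV K u hu (hus 0 K.zero_le).1 (hus K le_rfl).2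
  subst ht0 htN
  have hf : IntegrableOn f (Icc (t 0) (t N)) :=
    (integrableOn_Icc_iff_integrableOn_Ioo (by simp) (by simp)).2 hfi
  have hf_cell : ∀ k < N, IntervalIntegrable f volume (t k) (t (k + 1)) := fun k hk =>
    (intervalIntegrable_iff_integrableOn_Icc_of_le (ht hk.le hk k.le_succ)).2
      (hf.mono_set (ht.Icc_subset_Icc_of_lt hk))
  rw [integral_abs_sub_locAvg_eq_sum ht hf_cell]
  exact (sum_integral_abs_sub_interval_average_le ht hmesh' hf_cell
    (ne_top_of_le_ne_top ENNReal.ofReal_ne_top hvar)).trans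
    (mul_le_mul_of_nonneg_left (ENNReal.toReal_le_of_le_ofReal hV0 hvar) hh)

theorem L1_local_average_error_le_h_tv
    (a b : ℝ) (hab : a < b) (N : ℕ) (hN : 1 ≤ N)
    (t : ℕ → ℝ) (ht0 : t 0 = a) (htN : t N = b)
    (hmono : ∀ i < N, t i < t (i + 1))
    (h : ℝ) (hmesh : ∀ i ∈ Finset.Icc 1 N, t i - t (i - 1) ≤ h)
    (f : ℝ → ℝ) (hfm : Measurable f)
    (hfi : IntegrableOn f (Set.Ioo a b))
    (V : ℝ)
    (hV : ∀ (K : ℕ) (s : ℕ → ℝ), (∀ k < K, s k < s (k + 1)) →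
      a ≤ s 0 → s K ≤ b →
      ∑ k ∈ Finset.range K, |f (s (k + 1)) - f (s k)| ≤ V) :
    (∫ x in a..b, |f x - locAvg t N f x|) ≤ h * V :=
  L1_local_average_error_le_h_tv_general a b hab N hN t ht0 htN hmono h hmesh f hfi V hV
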